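/- arXiv:1807.11190 — 5 statements merged into one kernel-verified Lean document; each statement's English description precedes it below -/
import Mathlib

section
/- For any real numbers a, b, x with 0 < a ≤ 1, 0 < b ≤ 1, and 0 < x ≤ 1, we have x^(-a) * (1 - (1+x)^(-b)) < b. -/
theorem stmt0 (a b x : ℝ) (ha : 0 < a) (ha1 : a ≤ 1) (hb : 0 < b) (hb1 : b ≤ 1)
    (hx : 0 < x) (hx1 : x ≤ 1) :
    x ^ (-a) * (1 - (1 + x) ^ (-b)) < b := by
  have h1x : (0:ℝ) < 1 + x := by linarith
  have hbx : (0:ℝ) < 1 + b * x := by nlinarith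
  -- Bernoulli: (1+x)^b ≤ 1 + b*x
  have hbern : (1 + x) ^ b ≤ 1 + b * x :=
    rpow_one_add_le_one_add_mul_self (by linarith) hb.le hb1
  have hpow_pos : (0:ℝ) < (1 + x) ^ b := Real.rpow_pos_of_pos h1x b
  have hinv : (1 + b * x)⁻¹ ≤ (1 + x) ^ (-b) := by
    rw [Real.rpow_neg h1x.le]
    exact inv_anti₀ hpow_pos hbern
  have hkey : 1 - (1 + x) ^ (-b) < b * x := by
    have h5 : (1 + b * x)⁻¹ * (1 + b * x) = 1 := inv_mul_cancel₀ hbx.ne'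
    have h6 : (0:ℝ) < (1 + b * x)⁻¹ := inv_pos.mpr hbx
    have : 1 - (1 + b * x)⁻¹ < b * x := by nlinarith [mul_pos hb hx]
    linarith
  have hxa : (0:ℝ) < x ^ (-a) := Real.rpow_pos_of_pos hx _
  have h2 : x ^ (-a) * (1 - (1 + x) ^ (-b)) < x ^ (-a) * (b * x) :=
    mul_lt_mul_of_pos_left hkey hxa
  have h3 : x ^ (-a) * (b * x) = b * x ^ (1 - a) := by
    rw [show (1 - a) = -a + 1 by ring, Real.rpow_add_one hx.ne']
    ring
  have h4 : x ^ (1 - a) ≤ 1 := Real.rpow_le_one hx.le hx1 (by linarith)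
  calc x ^ (-a) * (1 - (1 + x) ^ (-b)) < b * x ^ (1 - a) := by rw [← h3]; exact h2
    _ ≤ b * 1 := by nlinarith
    _ = b := mul_one b
end

section
/- Fix N ≥ 1 real numbers u_1, …, u_N, an index i, and p ∈ (0,1]. Let I ⊆ {1,…,N}\{i} be a random subset where each j ≠ i is included independently with probability p, and define f̃ = u_i + ((N−1)/|I|) ∑_{j∈I} u_j if I ≠ ∅ and f̃ = 0 if I = ∅. If additionally P(I = ∅) = (1−p)^N, then E[f̃] = (1 − (1−p)^N) ∑_{j=1}^N u_j. -/
/-!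
Split f̃ into the term `u i`, which contributes `P(I ≠ ∅) = 1 - w ∅`, and the terms `u j`, `j ∈ I`.
Since the weights depend only on `|I|`, the swap of `j` and `k` shows that the coefficient
`(N - 1) ∑_{I ∋ j} w I / |I|` of `u j` does not depend on `j ≠ i`; summing it over the `N - 1`
choices of `j` counts each nonempty `I` exactly `|I|` times, so the coefficient is again `1 - w ∅`.
-/

open Finset

namespace Finset

section AddCommMonoid

variable {α β : Type*} [DecidableEq α] [AddCommMonoid β] {S : Finset α} {F : Finset α → β}

lemma swap_apply_mem {a b x : α} (ha : a ∈ S) (hb : b ∈ S) (hx : x ∈ S) :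
    Equiv.swap a b x ∈ S := by
  rw [Equiv.swap_apply_def]
  split_ifs <;> assumption

lemma map_swap_mem_powerset_filter {a b : α} (ha : a ∈ S) (hb : b ∈ S) {I : Finset α}
    (hI : I ∈ S.powerset.filter (a ∈ ·)) :
    I.map (Equiv.swap a b).toEmbedding ∈ S.powerset.filter (b ∈ ·) := by
  simp only [mem_filter, mem_powerset] at hI ⊢
  refine ⟨fun x hx => ?_, mem_map.2 ⟨a, hI.2, Equiv.swap_apply_left a b⟩⟩
  obtain ⟨y, hy, rfl⟩ := mem_map.1 hx
  exact swap_apply_mem ha hb (hI.1 hy)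

lemma sum_powerset_filter_mem_eq_of_card_eq
    (hF : ∀ I J, I ⊆ S → J ⊆ S → I.card = J.card → F I = F J) {a b : α}
    (ha : a ∈ S) (hb : b ∈ S) :
    ∑ I ∈ S.powerset.filter (a ∈ ·), F I = ∑ I ∈ S.powerset.filter (b ∈ ·), F I := by
  refine sum_nbij' (fun I => I.map (Equiv.swap a b).toEmbedding)
    (fun I => I.map (Equiv.swap a b).toEmbedding)
    (fun I hI => map_swap_mem_powerset_filter ha hb hI)
    (fun I hI => by simpa [Equiv.swap_comm] using map_swap_mem_powerset_filter hb ha hI)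
    (fun I _ => by ext; simp) (fun I _ => by ext; simp) fun I hI => ?_
  exact hF _ _ (mem_powerset.1 (mem_filter.1 hI).1)
    (mem_powerset.1 (mem_filter.1 (map_swap_mem_powerset_filter ha hb hI)).1) (card_map _).symm

lemma sum_sum_powerset_eq_sum_sum_filter_mem (f : Finset α → α → β) :
    ∑ I ∈ S.powerset, ∑ j ∈ I, f I j = ∑ j ∈ S, ∑ I ∈ S.powerset.filter (j ∈ ·), f I j :=
  sum_comm' fun I j => by
    simp only [mem_filter, mem_powerset]
    exact ⟨fun h => ⟨⟨h.1, h.2⟩, h.1 h.2⟩, fun h => ⟨h.1.1, h.1.2⟩⟩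

lemma card_nsmul_sum_powerset_filter_mem_of_card_eq
    (hF : ∀ I J, I ⊆ S → J ⊆ S → I.card = J.card → F I = F J) {j : α} (hj : j ∈ S) :
    S.card • ∑ I ∈ S.powerset.filter (j ∈ ·), F I = ∑ I ∈ S.powerset, I.card • F I := by
  calc S.card • ∑ I ∈ S.powerset.filter (j ∈ ·), F I
      = ∑ k ∈ S, ∑ I ∈ S.powerset.filter (k ∈ ·), F I := by
        rw [← sum_const, sum_congr rfl fun k hk => sum_powerset_filter_mem_eq_of_card_eq hF hk hj]
    _ = ∑ I ∈ S.powerset, I.card • F I := by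
        rw [← sum_sum_powerset_eq_sum_sum_filter_mem (fun I _ => F I)]
        simp only [sum_const]

end AddCommMonoid

variable {α K : Type*} [DecidableEq α] {S : Finset α}

lemma sum_powerset_ite_eq_empty_zero [AddCommGroup K] (f : Finset α → K) :
    ∑ I ∈ S.powerset, (if I = ∅ then 0 else f I) = ∑ I ∈ S.powerset, f I - f ∅ := by
  have h : ∀ I, (if I = ∅ then 0 else f I) = f I - if ∅ = I then f I else 0 := by
    intro I
    rcases eq_or_ne I ∅ with rfl | hI
    · simp
    · rw [if_neg hI, if_neg (Ne.symm hI), sub_zero]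
  rw [sum_congr rfl fun I _ => h I, sum_sub_distrib, sum_ite_eq, if_pos (empty_mem_powerset S)]

lemma card_mul_sum_powerset_filter_mem_div_card [Field K] [CharZero K] {w : Finset α → K}
    (hw : ∀ I J, I ⊆ S → J ⊆ S → I.card = J.card → w I = w J) {j : α} (hj : j ∈ S) :
    (S.card : K) * ∑ I ∈ S.powerset.filter (j ∈ ·), w I / I.card
      = ∑ I ∈ S.powerset, (if I = ∅ then 0 else w I) := by
  rw [← nsmul_eq_mul, card_nsmul_sum_powerset_filter_mem_of_card_eq
    (fun I J hI hJ h => by rw [hw I J hI hJ h, h]) hj]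
  refine sum_congr rfl fun I _ => ?_
  rcases eq_or_ne I ∅ with rfl | hI
  · simp
  · rw [if_neg hI, nsmul_eq_mul, mul_div_cancel₀ _ (by simpa using hI)]

end Finset

theorem stmt7_general (N : ℕ) (u : Fin N → ℝ) (i : Fin N) (p : ℝ)
    (w : Finset (Fin N) → ℝ)
    (hsum : ∑ I ∈ (Finset.univ.erase i).powerset, w I = 1)
    (hexch : ∀ I J, I ⊆ Finset.univ.erase i → J ⊆ Finset.univ.erase i →
      I.card = J.card → w I = w J)
    (hempty : w ∅ = (1 - p) ^ N) :
    ∑ I ∈ (Finset.univ.erase i).powerset,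
        w I * (if I = ∅ then 0
          else u i + (((N : ℝ) - 1) / I.card) * ∑ j ∈ I, u j)
      = (1 - (1 - p) ^ N) * ∑ j, u j := by
  set S := Finset.univ.erase i
  have hS : (N : ℝ) - 1 = S.card := by
    have h : S.card + 1 = N := by
      rw [card_erase_add_one (mem_univ i), card_univ, Fintype.card_fin]
    have : (S.card : ℝ) + 1 = N := by exact_mod_cast h
    linarith
  have hterm : ∀ I : Finset (Fin N),
      w I * (if I = ∅ then 0 else u i + (((N : ℝ) - 1) / I.card) * ∑ j ∈ I, u j)
        = (if I = ∅ then 0 else w I) * u i + ∑ j ∈ I, ((N : ℝ) - 1) * (w I / I.card) * u j := by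
    intro I
    rcases eq_or_ne I ∅ with rfl | hI
    · simp
    · rw [if_neg hI, if_neg hI, ← mul_sum]; ring
  have hm : ∑ I ∈ S.powerset, (if I = ∅ then 0 else w I) = 1 - w ∅ := by
    rw [sum_powerset_ite_eq_empty_zero, hsum]
  calc _ = (1 - w ∅) * u i + ∑ j ∈ S, (1 - w ∅) * u j := by
        rw [sum_congr rfl fun I _ => hterm I, sum_add_distrib, ← sum_mul, hm,
          sum_sum_powerset_eq_sum_sum_filter_mem (fun I j => ((N : ℝ) - 1) * (w I / I.card) * u j)]
        refine congrArg _ (sum_congr rfl fun j hj => ?_)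
        rw [← sum_mul, ← mul_sum, hS, card_mul_sum_powerset_filter_mem_div_card hexch hj, hm]
    _ = _ := by
        rw [hempty, ← add_sum_erase univ u (mem_univ i), ← mul_sum]
        ring

theorem stmt7 (N : ℕ) (hN : 1 ≤ N) (u : Fin N → ℝ) (i : Fin N) (p : ℝ)
    (hp : 0 < p) (hp1 : p ≤ 1)
    (w : Finset (Fin N) → ℝ) (hw0 : ∀ I, 0 ≤ w I)
    (hsum : ∑ I ∈ (Finset.univ.erase i).powerset, w I = 1)
    (hexch : ∀ I J, I ⊆ Finset.univ.erase i → J ⊆ Finset.univ.erase i →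
      I.card = J.card → w I = w J)
    (hempty : w ∅ = (1 - p) ^ N) :
    ∑ I ∈ (Finset.univ.erase i).powerset,
        w I * (if I = ∅ then 0
          else u i + (((N : ℝ) - 1) / I.card) * ∑ j ∈ I, u j)
      = (1 - (1 - p) ^ N) * ∑ j, u j :=
  stmt7_general N u i p w hsum hexch hempty
end

section
/- Let ν₁, ν₂ > 0, β_0, γ_0 > 0, A > 0 with β_0 γ_0 ≥ 2ν₂/A, β_k = β_0 (k+1)^(-ν₁), γ_k = γ_0 (k+1)^(-ν₂), and suppose ν₁ + ν₂ ≤ 1 and ν₂ ≤ 1/2. Then for all k ≥ 0, χ_k := (1 − (γ_{k+1}/γ_k)²)/(β_k γ_k) satisfies χ_k < A. -/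
theorem stmt15 (ν1 ν2 β0 γ0 A : ℝ) (hν1 : 0 < ν1) (hν2 : 0 < ν2)
    (hβ0 : 0 < β0) (hγ0 : 0 < γ0) (hA : 0 < A)
    (hcond : 2 * ν2 / A ≤ β0 * γ0) (hsum : ν1 + ν2 ≤ 1) (hν2' : ν2 ≤ 1 / 2) :
    ∀ k : ℕ,
      (1 - ((γ0 * ((k : ℝ) + 2) ^ (-ν2)) / (γ0 * ((k : ℝ) + 1) ^ (-ν2))) ^ 2) /
          ((β0 * ((k : ℝ) + 1) ^ (-ν1)) * (γ0 * ((k : ℝ) + 1) ^ (-ν2))) < A := by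
  intro k
  have hk : (0:ℝ) ≤ (k : ℝ) := Nat.cast_nonneg k
  set n : ℝ := (k : ℝ) + 1 with hn
  have hn0 : 0 < n := by positivity
  have hn1 : (1:ℝ) ≤ n := by simp [hn]
  set x : ℝ := 1 / n with hxdef
  have hx0 : 0 < x := by positivity
  -- denominator positivity
  have hDpos : 0 < (β0 * n ^ (-ν1)) * (γ0 * n ^ (-ν2)) := by positivity
  rw [div_lt_iff₀ hDpos]
  -- rewrite the ratio
  have hratio : (γ0 * (n + 1) ^ (-ν2)) / (γ0 * n ^ (-ν2)) = (1 + x) ^ (-ν2) := by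
    have h1 : (1 : ℝ) + x = (n + 1) / n := by rw [hxdef]; field_simp
    rw [h1, Real.div_rpow (by linarith) hn0.le, mul_div_mul_comm, div_self hγ0.ne',
      one_mul]
  have hkey : ((k:ℝ) + 2) = n + 1 := by rw [hn]; ring
  rw [hkey, hratio]
  -- bound the numerator: 1 - (1+x)^(-2ν2) < 2ν2 x
  have hsq : ((1 + x) ^ (-ν2)) ^ 2 = (1 + x) ^ (-(2 * ν2)) := by
    rw [← Real.rpow_natCast ((1 + x) ^ (-ν2)) 2, ← Real.rpow_mul (by linarith)]
    norm_num; ring_nf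
  have hP : 0 < (1 + x) ^ (2 * ν2) := Real.rpow_pos_of_pos (by linarith) _
  have hbern : (1 + x) ^ (2 * ν2) ≤ 1 + (2 * ν2) * x :=
    rpow_one_add_le_one_add_mul_self (by linarith) (by linarith) (by linarith)
  have hnum : 1 - (1 + x) ^ (-(2 * ν2)) < 2 * ν2 * x := by
    rw [Real.rpow_neg (by linarith)]
    have h2 : 1 - 2 * ν2 * x < ((1 + x) ^ (2 * ν2))⁻¹ := by
      rw [inv_eq_one_div, lt_div_iff₀ hP]
      rcases le_or_gt (1 - 2 * ν2 * x) 0 with h | h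
      · nlinarith [hP]
      · nlinarith [hbern, mul_pos hν2 hx0]
    linarith
  -- bound A * D from below
  have hAD : 2 * ν2 * x ≤ A * ((β0 * n ^ (-ν1)) * (γ0 * n ^ (-ν2))) := by
    have h2ν2 : 2 * ν2 ≤ A * (β0 * γ0) := by
      rw [div_le_iff₀ hA] at hcond; linarith
    have hexp : n ^ (-(1:ℝ)) ≤ n ^ (-(ν1 + ν2)) :=
      Real.rpow_le_rpow_of_exponent_le hn1 (by linarith)
    have hx_eq : x = n ^ (-(1:ℝ)) := by rw [Real.rpow_neg_one, hxdef, one_div]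
    have hmul : n ^ (-ν1) * n ^ (-ν2) = n ^ (-(ν1 + ν2)) := by
      rw [← Real.rpow_add hn0]; ring_nf
    calc 2 * ν2 * x = 2 * ν2 * n ^ (-(1:ℝ)) := by rw [hx_eq]
      _ ≤ 2 * ν2 * n ^ (-(ν1 + ν2)) := by
          apply mul_le_mul_of_nonneg_left hexp (by linarith)
      _ ≤ A * (β0 * γ0) * n ^ (-(ν1 + ν2)) := by
          apply mul_le_mul_of_nonneg_right h2ν2 (Real.rpow_nonneg hn0.le _)
      _ = A * ((β0 * n ^ (-ν1)) * (γ0 * n ^ (-ν2))) := by rw [← hmul]; ring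
  calc 1 - ((1 + x) ^ (-ν2)) ^ 2 = 1 - (1 + x) ^ (-(2 * ν2)) := by rw [hsq]
    _ < 2 * ν2 * x := hnum
    _ ≤ A * ((β0 * n ^ (-ν1)) * (γ0 * n ^ (-ν2))) := hAD
end

section
/- Let ν₁, ν₂ > 0 with ν₂ < ν₁, ν₁ + ν₂ ≤ 1, ν₁ − ν₂ ≤ 1, A > 0, and β_0 γ_0 ≥ (ν₁ − ν₂)/A. With β_k = β_0 (k+1)^(-ν₁), γ_k = γ_0 (k+1)^(-ν₂), the quantity ϖ_k := (1 − (β_{k+1}/γ_{k+1})·(γ_k/β_k)) / (β_k γ_k) satisfies ϖ_k < A for all k ≥ 0. -/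
/-!
With `x = 1/(k+1)`, the ratio of step sizes is `(1 + x)^(-(ν₁ - ν₂))` and the product `β_k γ_k` is
`β₀ γ₀ x^(ν₁ + ν₂)`, so the claim reduces to `1 - (1 + x)^(-b) < b x ≤ b x^a` for
`b = ν₁ - ν₂ ∈ (0, 1]`, `a = ν₁ + ν₂ ≤ 1`, followed by `b ≤ A β₀ γ₀`.
-/

open Real

/- Bernoulli's `(1 + x)^b ≤ 1 + b x` gives `(1 + x)^(-b) ≥ 1 / (1 + b x) > 1 - b x`. -/
lemma one_sub_one_add_rpow_neg_lt_mul {x b : ℝ} (hx : 0 < x) (hb : 0 < b) (hb1 : b ≤ 1) :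
    1 - (1 + x) ^ (-b) < b * x := by
  have hbx : 0 < b * x := mul_pos hb hx
  have hbernoulli : (1 + x) ^ b ≤ 1 + b * x :=
    rpow_one_add_le_one_add_mul_self (by linarith) hb.le hb1
  have hinv : (1 + b * x)⁻¹ ≤ (1 + x) ^ (-b) := by
    rw [rpow_neg (by linarith)]
    exact inv_anti₀ (rpow_pos_of_pos (by linarith) b) hbernoulli
  have hlt : 1 - b * x < (1 + b * x)⁻¹ := by
    rw [← one_div, lt_div_iff₀ (by linarith)]
    nlinarith
  linarith

lemma one_sub_one_add_rpow_neg_lt_mul_rpow {x a b : ℝ} (hx : 0 < x) (hx1 : x ≤ 1) (ha : a ≤ 1)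
    (hb : 0 < b) (hb1 : b ≤ 1) : 1 - (1 + x) ^ (-b) < b * x ^ a := by
  have hxa : x ≤ x ^ a := by
    simpa using rpow_le_rpow_of_exponent_ge hx hx1 ha
  calc 1 - (1 + x) ^ (-b) < b * x := one_sub_one_add_rpow_neg_lt_mul hx hb hb1
    _ ≤ b * x ^ a := by gcongr

lemma mul_rpow_neg_div_mul_rpow_neg {β γ ν₁ ν₂ s t : ℝ} (hβ : β ≠ 0) (hγ : γ ≠ 0)
    (hs : 0 < s) (ht : 0 < t) :
    β * t ^ (-ν₁) / (γ * t ^ (-ν₂)) * (γ * s ^ (-ν₂) / (β * s ^ (-ν₁))) =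
      (t / s) ^ (-(ν₁ - ν₂)) := by
  rw [div_rpow ht.le hs.le, show -(ν₁ - ν₂) = -ν₁ - -ν₂ by ring, rpow_sub ht, rpow_sub hs]
  have := (rpow_pos_of_pos hs (-ν₁)).ne'
  have := (rpow_pos_of_pos hs (-ν₂)).ne'
  have := (rpow_pos_of_pos ht (-ν₂)).ne'
  field_simp

lemma mul_rpow_neg_mul_mul_rpow_neg {β γ ν₁ ν₂ s : ℝ} (hs : 0 < s) :
    β * s ^ (-ν₁) * (γ * s ^ (-ν₂)) = β * γ * s⁻¹ ^ (ν₁ + ν₂) := by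
  rw [inv_rpow hs.le, ← rpow_neg hs.le, neg_add, rpow_add hs]
  ring

theorem stmt16_general (ν1 ν2 β0 γ0 A : ℝ)
    (hlt : ν2 < ν1) (hsum : ν1 + ν2 ≤ 1) (hdiff : ν1 - ν2 ≤ 1)
    (hβ0 : 0 < β0) (hγ0 : 0 < γ0) (hA : 0 < A)
    (hcond : (ν1 - ν2) / A ≤ β0 * γ0) :
    ∀ k : ℕ,
      (1 - ((β0 * ((k : ℝ) + 2) ^ (-ν1)) / (γ0 * ((k : ℝ) + 2) ^ (-ν2)))
            * ((γ0 * ((k : ℝ) + 1) ^ (-ν2)) / (β0 * ((k : ℝ) + 1) ^ (-ν1)))) /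
          ((β0 * ((k : ℝ) + 1) ^ (-ν1)) * (γ0 * ((k : ℝ) + 1) ^ (-ν2))) < A := by
  intro k
  have hs : (0 : ℝ) < (k : ℝ) + 1 := by positivity
  have hx1 : ((k : ℝ) + 1)⁻¹ ≤ 1 := inv_le_one_of_one_le₀ (by simp)
  have hstep : ((k : ℝ) + 2) / ((k : ℝ) + 1) = 1 + ((k : ℝ) + 1)⁻¹ := by field_simp; ring
  have hbA : ν1 - ν2 ≤ A * (β0 * γ0) := by rwa [div_le_iff₀ hA, mul_comm] at hcond
  rw [mul_rpow_neg_div_mul_rpow_neg hβ0.ne' hγ0.ne' hs (by positivity), hstep,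
    mul_rpow_neg_mul_mul_rpow_neg hs, div_lt_iff₀ (by positivity)]
  calc 1 - (1 + ((k : ℝ) + 1)⁻¹) ^ (-(ν1 - ν2))
      < (ν1 - ν2) * ((k : ℝ) + 1)⁻¹ ^ (ν1 + ν2) :=
        one_sub_one_add_rpow_neg_lt_mul_rpow (by positivity) hx1 hsum (by linarith) hdiff
    _ ≤ A * (β0 * γ0) * ((k : ℝ) + 1)⁻¹ ^ (ν1 + ν2) := by gcongr
    _ = A * (β0 * γ0 * ((k : ℝ) + 1)⁻¹ ^ (ν1 + ν2)) := by ring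

theorem stmt16 (ν1 ν2 β0 γ0 A : ℝ) (hν1 : 0 < ν1) (hν2 : 0 < ν2)
    (hlt : ν2 < ν1) (hsum : ν1 + ν2 ≤ 1) (hdiff : ν1 - ν2 ≤ 1)
    (hβ0 : 0 < β0) (hγ0 : 0 < γ0) (hA : 0 < A)
    (hcond : (ν1 - ν2) / A ≤ β0 * γ0) :
    ∀ k : ℕ,
      (1 - ((β0 * ((k : ℝ) + 2) ^ (-ν1)) / (γ0 * ((k : ℝ) + 2) ^ (-ν2)))
            * ((γ0 * ((k : ℝ) + 1) ^ (-ν2)) / (β0 * ((k : ℝ) + 1) ^ (-ν1)))) /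
          ((β0 * ((k : ℝ) + 1) ^ (-ν1)) * (γ0 * ((k : ℝ) + 1) ^ (-ν2))) < A :=
  stmt16_general ν1 ν2 β0 γ0 A hlt hsum hdiff hβ0 hγ0 hA hcond
end

section
/- Let (D_k)_{k≥K₀} be nonnegative reals satisfying D_{k+1} ≤ (1 − A β_k γ_k) D_k + B β_k γ_k² √(D_k) + C β_k² for all k ≥ K₀, where A, B, C > 0, 0 < A β_k γ_k < 1 for k ≥ K₀, and define ε₁ = sup_k χ_k with χ_k = (1 − (γ_{k+1}/γ_k)²)/(β_k γ_k) and ε₂ = sup_k β_k/γ_k³. Assume ε₁ < A and ε₂ < ∞. Then for any ϑ ≥ max{√(D_{K₀})/γ_{K₀}, (B + √(B² + 4 C ε₂ (A − ε₁)))/(2(A − ε₁))}, it holds that D_k ≤ ϑ² γ_k² for all k ≥ K₀. -/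
theorem stmt17 (β γ D : ℕ → ℝ) (A B C : ℝ) (K0 : ℕ)
    (hA : 0 < A) (hB : 0 < B) (hC : 0 < C)
    (hβ : ∀ k, 0 < β k) (hγ : ∀ k, 0 < γ k)
    (hD : ∀ k, K0 ≤ k → 0 ≤ D k)
    (hrec : ∀ k, K0 ≤ k →
      D (k + 1) ≤ (1 - A * β k * γ k) * D k
        + B * β k * (γ k) ^ 2 * Real.sqrt (D k) + C * (β k) ^ 2)
    (hsmall : ∀ k, K0 ≤ k → A * β k * γ k < 1)
    (ε₁ ε₂ : ℝ)
    (hε₁ : ∀ k, K0 ≤ k → (1 - (γ (k + 1) / γ k) ^ 2) / (β k * γ k) ≤ ε₁)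
    (hε₂ : ∀ k, K0 ≤ k → β k / (γ k) ^ 3 ≤ ε₂)
    (hε₁A : ε₁ < A)
    (ϑ : ℝ)
    (hϑ : max (Real.sqrt (D K0) / γ K0)
        ((B + Real.sqrt (B ^ 2 + 4 * C * ε₂ * (A - ε₁))) / (2 * (A - ε₁))) ≤ ϑ) :
    ∀ k, K0 ≤ k → D k ≤ ϑ ^ 2 * (γ k) ^ 2 := by
  have ha : 0 < A - ε₁ := sub_pos.mpr hε₁A
  have hε2pos : 0 < ε₂ :=
    lt_of_lt_of_le (div_pos (hβ K0) (pow_pos (hγ K0) 3)) (hε₂ K0 le_rfl)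
  have hdisc : 0 ≤ B ^ 2 + 4 * C * ε₂ * (A - ε₁) := by positivity
  set s := Real.sqrt (B ^ 2 + 4 * C * ε₂ * (A - ε₁)) with hs
  have hs2 : s ^ 2 = B ^ 2 + 4 * C * ε₂ * (A - ε₁) := Real.sq_sqrt hdisc
  have hsnn : 0 ≤ s := Real.sqrt_nonneg _
  have hsB : B ≤ s := by
    have h := Real.sqrt_le_sqrt (show B ^ 2 ≤ B ^ 2 + 4 * C * ε₂ * (A - ε₁) by nlinarith [mul_pos (mul_pos hC hε2pos) ha])
    rwa [Real.sqrt_sq hB.le] at h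
  have hϑr : (B + s) / (2 * (A - ε₁)) ≤ ϑ := le_trans (le_max_right _ _) hϑ
  have hϑpos : 0 < ϑ := lt_of_lt_of_le (by positivity) hϑr
  have hϑr' : B + s ≤ 2 * (A - ε₁) * ϑ := by
    rw [div_le_iff₀ (by positivity)] at hϑr; linarith
  have hquad : 0 ≤ (A - ε₁) * ϑ ^ 2 - B * ϑ - C * ε₂ := by
    nlinarith [mul_nonneg (by linarith : (0:ℝ) ≤ 2*(A-ε₁)*ϑ - B - s)
      (by linarith : (0:ℝ) ≤ 2*(A-ε₁)*ϑ - B + s)]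
  intro k hk
  induction k, hk using Nat.le_induction with
  | base =>
    have h1 : Real.sqrt (D K0) / γ K0 ≤ ϑ := le_trans (le_max_left _ _) hϑ
    have h2 : Real.sqrt (D K0) ≤ ϑ * γ K0 := by
      rw [div_le_iff₀ (hγ K0)] at h1; exact h1
    have h3 : Real.sqrt (D K0) ^ 2 = D K0 := Real.sq_sqrt (hD K0 le_rfl)
    nlinarith [Real.sqrt_nonneg (D K0), hγ K0]
  | succ k hk ih =>
    have hβk := hβ k
    have hγk := hγ k
    have hγk1 := hγ (k + 1)
    have hsq : Real.sqrt (D k) ≤ ϑ * γ k := by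
      have h := Real.sqrt_le_sqrt ih
      rwa [show ϑ ^ 2 * γ k ^ 2 = (ϑ * γ k) ^ 2 by ring,
        Real.sqrt_sq (by positivity)] at h
    have h1 : 0 < 1 - A * β k * γ k := by linarith [hsmall k hk]
    have hγe : γ k ^ 2 * (1 - ε₁ * (β k * γ k)) ≤ γ (k + 1) ^ 2 := by
      have h := (div_le_iff₀ (mul_pos hβk hγk)).mp (hε₁ k hk)
      have h2 : (γ (k + 1) / γ k) ^ 2 * γ k ^ 2 = γ (k + 1) ^ 2 := by
        field_simp
      nlinarith [sq_nonneg (γ k)]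
    have hβe : β k ≤ ε₂ * γ k ^ 3 := by
      have := (div_le_iff₀ (pow_pos hγk 3)).mp (hε₂ k hk)
      linarith
    have k1 : (1 - A * β k * γ k) * D k ≤ (1 - A * β k * γ k) * (ϑ ^ 2 * γ k ^ 2) :=
      mul_le_mul_of_nonneg_left ih h1.le
    have k2 : B * β k * γ k ^ 2 * Real.sqrt (D k) ≤ B * β k * γ k ^ 2 * (ϑ * γ k) :=
      mul_le_mul_of_nonneg_left hsq (by positivity)
    have t1 : 0 ≤ β k * γ k ^ 3 * ((A - ε₁) * ϑ ^ 2 - B * ϑ - C * ε₂) :=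
      mul_nonneg (by positivity) hquad
    have t2 : C * β k * β k ≤ C * β k * (ε₂ * γ k ^ 3) :=
      mul_le_mul_of_nonneg_left hβe (by positivity)
    have step : (1 - A * β k * γ k) * (ϑ ^ 2 * γ k ^ 2)
        + B * β k * γ k ^ 2 * (ϑ * γ k) + C * β k ^ 2
        ≤ ϑ ^ 2 * (γ k ^ 2 * (1 - ε₁ * (β k * γ k))) := by linarith [t1, t2]
    have last : ϑ ^ 2 * (γ k ^ 2 * (1 - ε₁ * (β k * γ k))) ≤ ϑ ^ 2 * γ (k + 1) ^ 2 :=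
      mul_le_mul_of_nonneg_left hγe (sq_nonneg ϑ)
    linarith [hrec k hk]
end
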